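/- arXiv:math/0310368 — 2 statements merged into one kernel-verified Lean document; each statement's English description precedes it below -/
import Mathlib

section
/- For any invertible matrix A over the Laurent polynomial ring k[t,t⁻¹] (k a field), there exist an invertible matrix S over k[t] and an invertible matrix T over k[t⁻¹] such that S·A·T is a diagonal matrix whose diagonal entries are powers t^{d_1},…,t^{d_r} for some integers d_1,…,d_r. -/
/-!
Write `A = diag(t^{d₁},…,t^{d_r}) · B` with `B` a matrix over `k[t⁻¹]`: such `dᵢ` exist because
every Laurent polynomial times a large enough power of `t⁻¹` lies in `k[t⁻¹]`. If `det A = a tⁿ`,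
then `det B = a t^{n - ∑ dᵢ}` lies in `k[t⁻¹]`, so `n ≤ ∑ dᵢ`, and we induct on `∑ dᵢ - n`.

If `∑ dᵢ = n`, then `det B` is a nonzero constant, so `B ∈ GL_r(k[t⁻¹])` and `A B⁻¹ = diag(t^{dᵢ})`.
Otherwise `det B` vanishes at `t = ∞`, so the rows of `B(∞)` satisfy a relation `∑ v_l B_l(∞) = 0`.
Choosing `i₀` with `v_{i₀} ≠ 0` and `d_{i₀}` maximal, the row operation replacing row `i₀` of `A`
by `v_{i₀}⁻¹ ∑ v_l t^{d_{i₀} - d_l} A_l` lies in `GL_r(k[t])`, and it lowers `d_{i₀}` by one because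
the new row of `B` vanishes at `t = ∞`.
-/

open LaurentPolynomial

/-- `S` is an invertible matrix over the subalgebra `Rsub` of the Laurent polynomial
ring: it is the image of a unit of the matrix ring over `Rsub`. -/
def IsGLOver {k : Type*} [Field k] {r : ℕ} (Rsub : Subalgebra k (LaurentPolynomial k))
    (S : Matrix (Fin r) (Fin r) (LaurentPolynomial k)) : Prop :=
  ∃ S' : (Matrix (Fin r) (Fin r) Rsub)ˣ,
    (S'.val).map (fun a => (a : LaurentPolynomial k)) = S

local notation:9000 R:max "[T]" => Algebra.adjoin R {(T 1 : R[T;T⁻¹])}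
local notation:9000 R:max "[T⁻¹]" => Algebra.adjoin R {(T (-1) : R[T;T⁻¹])}

namespace LaurentPolynomial

open Polynomial hiding C

section CommRing

variable {R : Type*} [CommRing R]

lemma prod_T {ι : Type*} (s : Finset ι) (d : ι → ℤ) :
    ∏ i ∈ s, (T (d i) : R[T;T⁻¹]) = T (∑ i ∈ s, d i) := by
  simp only [T, AddMonoidAlgebra.prod_single, Finset.prod_const_one]

lemma C_mem {S : Subalgebra R R[T;T⁻¹]} (a : R) : C a ∈ S := by
  rw [C_eq_algebraMap]
  exact S.algebraMap_mem a

lemma T_mem_adjoin_T_one {n : ℤ} (hn : 0 ≤ n) : (T n : R[T;T⁻¹]) ∈ R[T] := by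
  lift n to ℕ using hn
  simpa [T_pow] using pow_mem (Algebra.self_mem_adjoin_singleton R (T 1 : R[T;T⁻¹])) n

lemma T_mem_adjoin_T_neg_one {n : ℤ} (hn : n ≤ 0) : (T n : R[T;T⁻¹]) ∈ R[T⁻¹] := by
  obtain ⟨m, rfl⟩ := Int.exists_eq_neg_ofNat hn
  simpa [T_pow] using pow_mem (Algebra.self_mem_adjoin_singleton R (T (-1) : R[T;T⁻¹])) m

lemma aeval_T_neg_one_eq_invert_toLaurent (p : R[X]) :
    aeval (T (-1) : R[T;T⁻¹]) p = invert (toLaurent p) := by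
  have : aeval (T (-1) : R[T;T⁻¹]) =
      (invert : R[T;T⁻¹] ≃ₐ[R] R[T;T⁻¹]).toAlgHom.comp toLaurentAlg :=
    algHom_ext (by simp)
  rw [this]
  rfl

lemma aeval_T_neg_one_injective : Function.Injective (aeval (R := R) (T (-1) : R[T;T⁻¹])) := by
  intro p q h
  simpa [aeval_T_neg_one_eq_invert_toLaurent] using h

noncomputable def adjoinTNegOneEquiv : R[X] ≃ₐ[R] R[T⁻¹] :=
  (AlgEquiv.ofInjective _ aeval_T_neg_one_injective).trans
    (Subalgebra.equivOfEq _ _ (Algebra.adjoin_singleton_eq_range_aeval R _).symm)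

lemma coe_adjoinTNegOneEquiv (p : R[X]) :
    (adjoinTNegOneEquiv p : R[T;T⁻¹]) = aeval (T (-1)) p := rfl

noncomputable def evalInfty : R[T⁻¹] →ₐ[R] R :=
  (aeval 0).comp (adjoinTNegOneEquiv (R := R)).symm.toAlgHom

lemma evalInfty_adjoinTNegOneEquiv (p : R[X]) : evalInfty (adjoinTNegOneEquiv p) = p.coeff 0 := by
  simp [evalInfty, coeff_zero_eq_eval_zero]

lemma evalInfty_eq_zero_iff {f : R[T⁻¹]} :
    evalInfty f = 0 ↔ ∃ g : R[T⁻¹], (f : R[T;T⁻¹]) = T (-1) * (g : R[T;T⁻¹]) := by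
  obtain ⟨p, rfl⟩ := adjoinTNegOneEquiv.surjective f
  rw [evalInfty_adjoinTNegOneEquiv, ← X_dvd_iff]
  constructor
  · rintro ⟨q, rfl⟩
    exact ⟨adjoinTNegOneEquiv q, by simp [coe_adjoinTNegOneEquiv]⟩
  · rintro ⟨g, hg⟩
    obtain ⟨q, rfl⟩ := adjoinTNegOneEquiv.surjective g
    refine ⟨q, aeval_T_neg_one_injective ?_⟩
    simpa [coe_adjoinTNegOneEquiv] using hg

lemma T_mem_adjoin_T_neg_one_iff [Nontrivial R] {n : ℤ} :
    (T n : R[T;T⁻¹]) ∈ R[T⁻¹] ↔ n ≤ 0 := by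
  refine ⟨fun hn => ?_, T_mem_adjoin_T_neg_one⟩
  by_contra! hpos
  have hT1 : (T 1 : R[T;T⁻¹]) ∈ R[T⁻¹] := by
    have := mul_mem (T_mem_adjoin_T_neg_one (R := R) (by omega : 1 - n ≤ 0)) hn
    rwa [← T_add, sub_add_cancel] at this
  -- `1 = t⁻¹ · t` would vanish at `t = ∞`
  have h1 : evalInfty (1 : R[T⁻¹]) = 0 :=
    evalInfty_eq_zero_iff.mpr ⟨⟨T 1, hT1⟩, by rw [← T_add, neg_add_cancel, T_zero]; rfl⟩
  simp at h1

lemma exists_T_neg_mul_mem (f : R[T;T⁻¹]) :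
    ∃ N : ℕ, ∀ m : ℕ, N ≤ m → T (-m) * f ∈ R[T⁻¹] := by
  obtain ⟨N, p, hp⟩ := exists_T_pow (invert f)
  refine ⟨N, fun m hm => ?_⟩
  have hf : T (-N) * f ∈ R[T⁻¹] := by
    rw [Algebra.adjoin_singleton_eq_range_aeval]
    refine ⟨p, ?_⟩
    rw [AlgHom.toRingHom_eq_coe, RingHom.coe_coe, aeval_T_neg_one_eq_invert_toLaurent, hp,
      map_mul, involutive_invert, invert_T, mul_comm]
  have := mul_mem (T_mem_adjoin_T_neg_one (R := R) (n := N - m) (by omega)) hf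
  rwa [← mul_assoc, ← T_add, show (N - m : ℤ) + -N = -m by ring] at this

lemma exists_forall_T_neg_mul_mem {ι ι' : Type*} [Fintype ι] [Fintype ι']
    (M : Matrix ι ι' R[T;T⁻¹]) : ∃ N : ℕ, ∀ i j, T (-N) * M i j ∈ R[T⁻¹] := by
  classical
  choose N hN using fun p : ι × ι' => exists_T_neg_mul_mem (M p.1 p.2)
  exact ⟨Finset.univ.sup N, fun i j => hN (i, j) _ (Finset.le_sup (Finset.mem_univ _))⟩

end CommRing

lemma exists_C_mul_T_of_isUnit {R : Type*} [CommRing R] [IsDomain R] {f : R[T;T⁻¹]}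
    (hf : IsUnit f) : ∃ (a : R) (n : ℤ), IsUnit a ∧ f = C a * T n := by
  obtain ⟨g, hfg⟩ := hf.exists_right_inv
  obtain ⟨n, p, hp⟩ := exists_T_pow f
  obtain ⟨m, q, hq⟩ := exists_T_pow g
  have hpq : p * q = X ^ (n + m) := toLaurent_injective <| by
    rw [map_mul, hp, hq, toLaurent_X_pow, Nat.cast_add, T_add]
    linear_combination (T n * T m) * hfg
  obtain ⟨i, -, u, hu⟩ := (dvd_prime_pow prime_X _).mp ⟨q, hpq.symm⟩
  obtain ⟨c, hc, hcu⟩ := Polynomial.isUnit_iff.mp (u⁻¹).isUnit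
  refine ⟨c, i - n, hc, ?_⟩
  have hp' : p = X ^ i * Polynomial.C c := by rw [hcu, ← hu, Units.mul_inv_cancel_right]
  have hf' : f = toLaurent p * T (-n) := by
    rw [hp, mul_assoc, ← T_add, add_neg_cancel, T_zero, mul_one]
  rw [hf', hp', map_mul, toLaurent_X_pow, toLaurent_C, mul_comm (T _), mul_assoc, ← T_add,
    ← sub_eq_add_neg]

end LaurentPolynomial

lemma Matrix.det_updateRow_one {n R : Type*} [Fintype n] [DecidableEq n] [CommRing R] (i : n)
    (w : n → R) : ((1 : Matrix n n R).updateRow i w).det = w i := by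
  have hw : ∑ l, w l • (1 : Matrix n n R) l = w := by
    ext j
    simp [Matrix.one_apply]
  rw [← hw, det_updateRow_sum, det_one, smul_eq_mul, mul_one, hw]

lemma Subalgebra.coe_det {n R A : Type*} [Fintype n] [DecidableEq n] [CommRing R] [CommRing A]
    [Algebra R A] {S : Subalgebra R A} (B : Matrix n n S) :
    (B.det : A) = (B.map Subtype.val).det :=
  S.val.map_det B

section IsGLOver

variable {k : Type*} [Field k] {r : ℕ} {Rsub : Subalgebra k k[T;T⁻¹]}

lemma isGLOver_one : IsGLOver Rsub (1 : Matrix (Fin r) (Fin r) k[T;T⁻¹]) :=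
  ⟨1, by simp⟩

lemma IsGLOver.mul {S S' : Matrix (Fin r) (Fin r) k[T;T⁻¹]} (hS : IsGLOver Rsub S)
    (hS' : IsGLOver Rsub S') : IsGLOver Rsub (S * S') := by
  obtain ⟨U, rfl⟩ := hS
  obtain ⟨U', rfl⟩ := hS'
  exact ⟨U * U', map_mul Rsub.val.mapMatrix U.val U'.val⟩

lemma IsGLOver.inv {S : Matrix (Fin r) (Fin r) k[T;T⁻¹]} (hS : IsGLOver Rsub S) :
    IsGLOver Rsub S⁻¹ := by
  obtain ⟨U, rfl⟩ := hS
  refine ⟨U⁻¹, (Matrix.inv_eq_left_inv ?_).symm⟩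
  change Rsub.val.mapMatrix _ * Rsub.val.mapMatrix _ = 1
  rw [← map_mul, ← Units.val_mul, inv_mul_cancel, Units.val_one, map_one]

lemma isGLOver_map_of_isUnit_det {B : Matrix (Fin r) (Fin r) Rsub} (hB : IsUnit B.det) :
    IsGLOver Rsub (B.map Subtype.val) := by
  obtain ⟨U, hU⟩ := (Matrix.isUnit_iff_isUnit_det B).mpr hB
  exact ⟨U, by rw [hU]⟩

lemma isGLOver_of_forall_mem_of_det_eq_one {E : Matrix (Fin r) (Fin r) k[T;T⁻¹]}
    (hE : ∀ i j, E i j ∈ Rsub) (hdet : E.det = 1) : IsGLOver Rsub E := by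
  let E' : Matrix (Fin r) (Fin r) Rsub := Matrix.of fun i j => ⟨E i j, hE i j⟩
  have : E'.det = 1 := Subtype.ext (by rw [Subalgebra.coe_det]; exact hdet)
  exact isGLOver_map_of_isUnit_det (B := E') (this ▸ isUnit_one)

end IsGLOver

section Factorization

open Matrix

variable {k : Type*} [Field k] {r : ℕ}

lemma updateRow_one_mul_diagonal_mul {R : Type*} [CommRing R] (d : Fin r → ℤ)
    (B : Matrix (Fin r) (Fin r) R[T⁻¹]) (i₀ : Fin r) (c : Fin r → R) {g : Fin r → R[T⁻¹]}
    (hg : ∀ j, ((∑ l, c l • B l j : R[T⁻¹]) : R[T;T⁻¹]) = T (-1) * (g j : R[T;T⁻¹])) :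
    (1 : Matrix (Fin r) (Fin r) R[T;T⁻¹]).updateRow i₀ (fun l => C (c l) * T (d i₀ - d l)) *
        (diagonal (fun i => T (d i)) * B.map Subtype.val) =
      diagonal (fun i => T ((d - Pi.single i₀ 1 : Fin r → ℤ) i)) *
        (B.updateRow i₀ g).map Subtype.val := by
  rw [updateRow_mul, Matrix.one_mul]
  refine Matrix.ext fun i j => ?_
  by_cases hi : i = i₀
  · subst hi
    have hcoe : ((∑ l, c l • B l j : R[T⁻¹]) : R[T;T⁻¹]) = ∑ l, C (c l) * B l j := by
      simp [smul_eq_C_mul]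
    have hterm : ∀ l, C (c l) * T (d i - d l) * (T (d l) * (B l j : R[T;T⁻¹])) =
        T (d i) * (C (c l) * (B l j : R[T;T⁻¹])) := by
      intro l
      rw [show T (d i) = T (d i - d l) * T (d l) by rw [← T_add, sub_add_cancel]]
      ring
    simp only [updateRow_self, diagonal_mul, vecMul, dotProduct, map_apply, Pi.sub_apply,
      Pi.single_eq_same]
    rw [Finset.sum_congr rfl fun l _ => hterm l, ← Finset.mul_sum, ← hcoe, hg, ← mul_assoc,
      ← T_add, sub_eq_add_neg]
  · simp [diagonal_mul, Pi.single_apply, hi]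

theorem exists_row_reduction (d : Fin r → ℤ) (B : Matrix (Fin r) (Fin r) k[T⁻¹])
    (hB : (B.map evalInfty).det = 0) :
    ∃ (E : Matrix (Fin r) (Fin r) k[T;T⁻¹]) (d' : Fin r → ℤ)
      (B' : Matrix (Fin r) (Fin r) k[T⁻¹]),
      IsGLOver k[T] E ∧ E.det = 1 ∧ ∑ i, d' i = ∑ i, d i - 1 ∧
      E * (diagonal (fun i => T (d i)) * B.map Subtype.val) =
        diagonal (fun i => T (d' i)) * B'.map Subtype.val := by
  classical
  obtain ⟨v, hv0, hv⟩ := exists_vecMul_eq_zero_iff.mpr hB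
  obtain ⟨i₀, hi₀, hmax⟩ := Finset.exists_max_image {i | v i ≠ 0} d
    (by obtain ⟨i, hi⟩ := Function.ne_iff.mp hv0; exact ⟨i, by simpa using hi⟩)
  simp only [Finset.mem_filter, Finset.mem_univ, true_and] at hi₀ hmax
  have hlead : ∀ j, evalInfty (∑ l, (v l / v i₀) • B l j) = 0 := by
    intro j
    have := congrFun hv j
    simp only [vecMul, dotProduct, map_apply, Pi.zero_apply] at this
    simp only [map_sum, map_smul, smul_eq_mul, div_eq_mul_inv, mul_right_comm _ (v i₀)⁻¹,
      ← Finset.sum_mul, this, zero_mul]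
  choose g hg using fun j => evalInfty_eq_zero_iff.mp (hlead j)
  have hdet : ((1 : Matrix (Fin r) (Fin r) k[T;T⁻¹]).updateRow i₀
      (fun l => C (v l / v i₀) * T (d i₀ - d l))).det = 1 := by
    simp [det_updateRow_one, hi₀]
  refine ⟨_, d - Pi.single i₀ 1, B.updateRow i₀ g,
    isGLOver_of_forall_mem_of_det_eq_one (fun i j => ?_) hdet, hdet, ?_,
    updateRow_one_mul_diagonal_mul d B i₀ _ hg⟩
  · rw [updateRow_apply, one_apply]
    split_ifs
    · by_cases hj : v j = 0
      · simp [hj]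
      · exact mul_mem (C_mem _) (T_mem_adjoin_T_one (by linarith [hmax j hj]))
    · exact one_mem _
    · exact zero_mem _
  · simp [Finset.sum_sub_distrib]

variable {d : Fin r → ℤ} {B : Matrix (Fin r) (Fin r) k[T⁻¹]} {a : k} {n : ℤ}

lemma coe_det_eq_C_mul_T
    (hdet : (diagonal (fun i => T (d i)) * B.map Subtype.val).det = C a * T n) :
    (B.det : k[T;T⁻¹]) = C a * T (n - ∑ i, d i) := by
  rw [det_mul, det_diagonal, prod_T, ← Subalgebra.coe_det] at hdet
  calc (B.det : k[T;T⁻¹]) = T (-∑ i, d i) * (T (∑ i, d i) * (B.det : k[T;T⁻¹])) := by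
        rw [← mul_assoc, ← T_add, neg_add_cancel, T_zero, one_mul]
    _ = C a * T (n - ∑ i, d i) := by rw [hdet, T_sub]; ring

lemma le_sum_of_det_eq (ha : a ≠ 0)
    (hdet : (diagonal (fun i => T (d i)) * B.map Subtype.val).det = C a * T n) : n ≤ ∑ i, d i := by
  have hmem : (T (n - ∑ i, d i) : k[T;T⁻¹]) ∈ k[T⁻¹] := by
    have := mul_mem (C_mem (S := k[T⁻¹]) a⁻¹) B.det.2
    rwa [coe_det_eq_C_mul_T hdet, ← mul_assoc, ← map_mul, inv_mul_cancel₀ ha, map_one,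
      one_mul] at this
  exact sub_nonpos.mp (T_mem_adjoin_T_neg_one_iff.mp hmem)

lemma isUnit_det_of_sum_eq (ha : a ≠ 0)
    (hdet : (diagonal (fun i => T (d i)) * B.map Subtype.val).det = C a * T n)
    (hsum : ∑ i, d i = n) :
    IsUnit B.det := by
  have : B.det = algebraMap k k[T⁻¹] a := by
    apply Subtype.ext
    rw [coe_det_eq_C_mul_T hdet, hsum, sub_self, T_zero, mul_one, C_eq_algebraMap]
    rfl
  exact this ▸ (Ne.isUnit ha).map _

lemma det_map_evalInfty_eq_zero_of_lt
    (hdet : (diagonal (fun i => T (d i)) * B.map Subtype.val).det = C a * T n)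
    (hlt : n < ∑ i, d i) :
    (B.map evalInfty).det = 0 := by
  change (evalInfty.mapMatrix B).det = 0
  rw [← AlgHom.map_det, evalInfty_eq_zero_iff]
  have hmem := mul_mem (C_mem (S := k[T⁻¹]) a)
    (T_mem_adjoin_T_neg_one (R := k) (n := n - ∑ i, d i + 1) (by omega))
  refine ⟨⟨_, hmem⟩, ?_⟩
  change _ = T (-1) * (C a * T (n - ∑ i, d i + 1))
  rw [coe_det_eq_C_mul_T hdet, mul_left_comm, ← T_add]
  ring_nf

theorem exists_isGLOver_mul_mul_eq_diagonal (ha : a ≠ 0)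
    (hdet : (diagonal (fun i => T (d i)) * B.map Subtype.val).det = C a * T n) :
    ∃ (S T' : Matrix (Fin r) (Fin r) k[T;T⁻¹]) (e : Fin r → ℤ), IsGLOver k[T] S ∧
      IsGLOver k[T⁻¹] T' ∧
      S * (diagonal (fun i => T (d i)) * B.map Subtype.val) * T' = diagonal (fun i => T (e i)) := by
  obtain ⟨K, hK⟩ := Int.eq_ofNat_of_zero_le (sub_nonneg.mpr (le_sum_of_det_eq ha hdet))
  induction K generalizing d B with
  | zero =>
    have hB := isUnit_det_of_sum_eq ha hdet (by omega)
    refine ⟨1, (B.map Subtype.val)⁻¹, d, isGLOver_one, (isGLOver_map_of_isUnit_det hB).inv, ?_⟩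
    have hB' : IsUnit (B.map Subtype.val).det := by
      rw [← Subalgebra.coe_det]
      exact hB.map k[T⁻¹].val
    rw [Matrix.one_mul, mul_nonsing_inv_cancel_right _ _ hB']
  | succ K ih =>
    obtain ⟨E, d', B', hE, hEdet, hsum, hEB⟩ :=
      exists_row_reduction d B (det_map_evalInfty_eq_zero_of_lt hdet (by omega))
    obtain ⟨S, T', e, hS, hT', h⟩ :=
      ih (d := d') (B := B') (by rw [← hEB, det_mul, hEdet, one_mul, hdet]) (by omega)
    exact ⟨S * E, T', e, hS.mul hE, hT', by rw [Matrix.mul_assoc S, hEB, h]⟩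

end Factorization

/-- For any invertible matrix `A` over the Laurent polynomial ring `k[t,t⁻¹]`
there are an invertible matrix `S` over `k[t]` and an invertible matrix `T'`
over `k[t⁻¹]` such that `S·A·T'` is the diagonal matrix `diag(t^{d₁},…,t^{d_r})`
for some integers `d₁,…,d_r`.  Here `k[t]` (resp. `k[t⁻¹]`) is the subalgebra of
`k[t,t⁻¹]` generated by `t = T 1` (resp. `t⁻¹ = T (-1)`). -/
theorem smith_normal_form_laurent (k : Type*) [Field k] (r : ℕ)
    (A : GL (Fin r) (LaurentPolynomial k)) :
    ∃ (S T' : Matrix (Fin r) (Fin r) (LaurentPolynomial k)) (d : Fin r → ℤ),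
      IsGLOver (Algebra.adjoin k {(T 1 : LaurentPolynomial k)}) S ∧
      IsGLOver (Algebra.adjoin k {(T (-1) : LaurentPolynomial k)}) T' ∧
      S * (A : Matrix (Fin r) (Fin r) (LaurentPolynomial k)) * T' =
        Matrix.diagonal (fun i => T (d i)) := by
  obtain ⟨a, n, ha, hdet⟩ :=
    exists_C_mul_T_of_isUnit ((Matrix.isUnit_iff_isUnit_det _).mp A.isUnit)
  obtain ⟨N, hN⟩ := exists_forall_T_neg_mul_mem (A : Matrix (Fin r) (Fin r) k[T;T⁻¹])
  let B : Matrix (Fin r) (Fin r) k[T⁻¹] := Matrix.of fun i j => ⟨T (-N) * A i j, hN i j⟩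
  have hA : (A : Matrix (Fin r) (Fin r) k[T;T⁻¹]) =
      Matrix.diagonal (fun _ => T N) * B.map Subtype.val := by
    refine Matrix.ext fun i j => ?_
    simp [B, Matrix.diagonal_mul, ← mul_assoc]
  rw [hA] at hdet ⊢
  exact exists_isGLOver_mul_mul_eq_diagonal (d := fun _ => N) ha.ne_zero hdet
end

section
/- The number of pairs (r, d) of coprime positive integers with r ≤ d and r + max(d − b·r, 0) = m is at most b·φ(m), where φ is Euler's totient function and b ≥ 1 is a fixed integer. -/
/-- The number of pairs `(r, d)` of coprime positive integers with `r ≤ d` and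
`r + (d − b·r)⁺ = m` is at most `b·φ(m)`.  (Here, for natural numbers,
`d - b*r` is truncated subtraction, which agrees with the positive part
`(d − b·r)⁺` of the integer `d − b·r`.) -/
theorem count_coprime_pairs_le (b m : ℕ) (hb : 1 ≤ b) (hm : 1 ≤ m) :
    {p : ℕ × ℕ | 0 < p.1 ∧ p.1 ≤ p.2 ∧ Nat.Coprime p.1 p.2 ∧
        p.1 + (p.2 - b * p.1) = m}.Finite ∧
      {p : ℕ × ℕ | 0 < p.1 ∧ p.1 ≤ p.2 ∧ Nat.Coprime p.1 p.2 ∧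
        p.1 + (p.2 - b * p.1) = m}.ncard ≤ b * Nat.totient m := by
  set S : Set (ℕ × ℕ) := {p : ℕ × ℕ | 0 < p.1 ∧ p.1 ≤ p.2 ∧ Nat.Coprime p.1 p.2 ∧
      p.1 + (p.2 - b * p.1) = m} with hS
  set T : Finset (ℕ × ℕ) := Finset.range b ×ˢ ((Finset.range m).filter m.Coprime) with hT
  have hTcard : T.card = b * Nat.totient m := by
    simp [hT, Nat.totient]
  set f : ℕ × ℕ → ℕ × ℕ := fun p => if b * p.1 < p.2 then (0, p.1)
    else ((p.2 - 1) / m, p.2 % m) with hf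
  -- In the "else" case, r = m.
  have key1 : ∀ r d : ℕ, (r, d) ∈ S → ¬ b * r < d →
      r = m ∧ (m + 1 ≤ d ∨ (m = 1 ∧ d = 1)) := by
    intro r d hp hle
    obtain ⟨hr, hrd, hcop, hsum⟩ := hp
    dsimp only at hr hrd hcop hsum
    push_neg at hle
    have h0 : d - b * r = 0 := Nat.sub_eq_zero_of_le hle
    have hrm : r = m := by omega
    subst hrm
    refine ⟨rfl, ?_⟩
    by_cases hd : d = r
    · right
      subst hd
      have h1 : d = 1 := by simpa [Nat.Coprime, Nat.gcd_self] using hcop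
      exact ⟨h1, h1⟩
    · left; omega
  -- In the "if" case, r < m and d = (m - r) + r * b.
  have key2 : ∀ r d : ℕ, (r, d) ∈ S → b * r < d → r < m ∧ d = (m - r) + r * b := by
    intro r d hp hlt
    obtain ⟨hr, hrd, hcop, hsum⟩ := hp
    dsimp only at hr hrd hcop hsum
    have hx : r * b = b * r := Nat.mul_comm r b
    constructor <;> omega
  have hmem : ∀ p ∈ S, f p ∈ T := by
    rintro ⟨r, d⟩ hp
    have hp' := hp
    obtain ⟨hr, hrd, hcop, hsum⟩ := hp'
    dsimp only at hr hrd hcop hsum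
    simp only [hf]
    by_cases hlt : b * r < d
    · obtain ⟨hrm, hd⟩ := key2 r d hp hlt
      simp only [if_pos hlt]
      simp only [hT, Finset.mem_product, Finset.mem_range, Finset.mem_filter]
      refine ⟨hb, hrm, ?_⟩
      have h1 : Nat.Coprime r ((m - r) + r * b) := hd ▸ hcop
      rw [Nat.coprime_add_mul_left_right] at h1
      have h2 : Nat.Coprime r ((m - r) + r) := Nat.coprime_add_self_right.mpr h1
      have h3 : (m - r) + r = m := by omega
      rw [h3] at h2
      exact h2.symm
    · obtain ⟨hrm, hd⟩ := key1 r d hp hlt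
      push_neg at hlt
      subst hrm
      simp only [if_neg (by omega : ¬ b * r < d)]
      simp only [hT, Finset.mem_product, Finset.mem_range, Finset.mem_filter]
      refine ⟨?_, Nat.mod_lt _ (by omega), ?_⟩
      · rw [Nat.div_lt_iff_lt_mul (by omega : 0 < r)]
        omega
      · have : Nat.gcd (d % r) r = 1 := by rw [← Nat.gcd_rec]; exact hcop
        exact Nat.Coprime.symm this
  have hinj : Set.InjOn f S := by
    rintro ⟨r, d⟩ hp ⟨r', d'⟩ hq hfeq
    simp only [hf] at hfeq
    by_cases h1 : b * r < d <;> by_cases h2 : b * r' < d'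
    · simp only [if_pos h1, if_pos h2, Prod.mk.injEq] at hfeq
      obtain ⟨-, hrr⟩ := hfeq
      subst hrr
      obtain ⟨hlt, hd⟩ := key2 r d hp h1
      obtain ⟨hlt', hd'⟩ := key2 r d' hq h2
      simp only [Prod.mk.injEq]
      exact ⟨trivial, by omega⟩
    · exfalso
      simp only [if_pos h1, if_neg h2, Prod.mk.injEq] at hfeq
      obtain ⟨hlt, -⟩ := key2 r d hp h1
      have hr0 : 0 < r := hp.1
      have hm2 : 2 ≤ m := by omega
      obtain ⟨hrm, hd⟩ := key1 r' d' hq h2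
      have hd2 : m + 1 ≤ d' := by omega
      have : 1 ≤ (d' - 1) / m := by
        rw [Nat.le_div_iff_mul_le (by omega : 0 < m)]
        omega
      omega
    · exfalso
      simp only [if_neg h1, if_pos h2, Prod.mk.injEq] at hfeq
      obtain ⟨hlt, -⟩ := key2 r' d' hq h2
      have hr0 : 0 < r' := hq.1
      have hm2 : 2 ≤ m := by omega
      obtain ⟨hrm, hd⟩ := key1 r d hp h1
      have hd2 : m + 1 ≤ d := by omega
      have : 1 ≤ (d - 1) / m := by
        rw [Nat.le_div_iff_mul_le (by omega : 0 < m)]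
        omega
      omega
    · simp only [if_neg h1, if_neg h2, Prod.mk.injEq] at hfeq
      obtain ⟨hq1, hq2⟩ := hfeq
      obtain ⟨hr, -⟩ := key1 r d hp h1
      obtain ⟨hr', -⟩ := key1 r' d' hq h2
      have hd1 : 1 ≤ d := by have := hp.1; have := hp.2.1; omega
      have hd1' : 1 ≤ d' := by have := hq.1; have := hq.2.1; omega
      have e1 := Nat.div_add_mod (d - 1) m
      have e2 := Nat.mod_lt (d - 1) (by omega : 0 < m)
      have e1' := Nat.div_add_mod (d' - 1) m
      have e2' := Nat.mod_lt (d' - 1) (by omega : 0 < m)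
      rw [hq1] at e1
      -- now d, d' lie in the same interval of length m, and d % m = d' % m
      have hdd : d = d' := by
        rcases le_total d d' with hle | hle
        · have hdvd : m ∣ d' - d := (Nat.modEq_iff_dvd' hle).mp hq2
          have h0 : d' - d = 0 := Nat.eq_zero_of_dvd_of_lt hdvd (by omega) 
          omega
        · have hdvd : m ∣ d - d' := (Nat.modEq_iff_dvd' hle).mp hq2.symm
          have h0 : d - d' = 0 := Nat.eq_zero_of_dvd_of_lt hdvd (by omega)
          omega
      simp [Prod.ext_iff, hr, hr', hdd]
  have hfin : S.Finite := by
    apply Set.Finite.of_finite_image _ hinj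
    exact T.finite_toSet.subset (by rintro _ ⟨p, hp, rfl⟩; exact hmem p hp)
  refine ⟨hfin, ?_⟩
  calc S.ncard ≤ (↑T : Set (ℕ × ℕ)).ncard :=
        Set.ncard_le_ncard_of_injOn f (fun a ha => hmem a ha) hinj T.finite_toSet
    _ = T.card := Set.ncard_coe_finset T
    _ = b * Nat.totient m := hTcard
end
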